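/- arXiv:1810.08974 — 2 statements merged into one kernel-verified Lean document; each statement's English description precedes it below -/
import Mathlib

section
/- Let α > 0 and 0 < b < 1. Define g(τ) = (4(2-b)/α)(e^{ατ} - 1 - ατ - (α²/2)τ²) - (8/α)(e^{ατ}(ατ - 1) + 1 - (α²/2)τ²). Then g(τ) ≤ 0 for all τ ≥ 0. -/
/-!
With `x = ατ ≥ 0`, `A = eˣ - 1 - x - x²/2` and `B = eˣ(x - 1) + 1 - x²/2` we have
`g(τ) = (4/α)((2 - b)A - 2B)`. The Taylor bound gives `A ≥ 0`, and `B - A = 2 + x - (2 - x)eˣ ≥ 0`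
because this function vanishes at `0` and has derivative `1 - (1 - x)eˣ ≥ 0`.
Hence `(2 - b)A ≤ 2A ≤ 2B`.
-/

open Real

lemma Real.one_sub_mul_exp_le_one (x : ℝ) : (1 - x) * exp x ≤ 1 :=
  calc (1 - x) * exp x ≤ exp (-x) * exp x := by gcongr; exact one_sub_le_exp_neg x
    _ = 1 := by rw [← exp_add, neg_add_cancel, exp_zero]

lemma Real.two_sub_mul_exp_le_two_add {x : ℝ} (hx : 0 ≤ x) : (2 - x) * exp x ≤ 2 + x := by
  have hmono : Monotone fun y ↦ 2 + y - (2 - y) * exp y := by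
    refine monotone_of_hasDerivAt_nonneg (f' := fun y ↦ 1 - (1 - y) * exp y) (fun y ↦ ?_)
      (fun y ↦ sub_nonneg.2 (one_sub_mul_exp_le_one y))
    have h : HasDerivAt (fun y ↦ 2 + y - (2 - y) * exp y)
        (1 - (-1 * exp y + (2 - y) * exp y)) y :=
      ((hasDerivAt_id' y).const_add 2).sub
        (((hasDerivAt_id' y).const_sub 2).mul (hasDerivAt_exp y))
    convert h using 1
    ring
  simpa using hmono hx

lemma Real.two_sub_mul_taylor_remainder_le {b x : ℝ} (hb : 0 ≤ b) (hx : 0 ≤ x) :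
    (2 - b) * (exp x - 1 - x - x ^ 2 / 2) ≤ 2 * (exp x * (x - 1) + 1 - x ^ 2 / 2) := by
  have hA : 0 ≤ exp x - 1 - x - x ^ 2 / 2 := by linarith [quadratic_le_exp_of_nonneg hx]
  calc (2 - b) * (exp x - 1 - x - x ^ 2 / 2) ≤ 2 * (exp x - 1 - x - x ^ 2 / 2) := by
        gcongr; linarith
    _ ≤ 2 * (exp x * (x - 1) + 1 - x ^ 2 / 2) := by
        linarith [two_sub_mul_exp_le_two_add hx]

theorem stmt_1_general (α b : ℝ) (hα : 0 < α) (hb0 : 0 < b)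
    (g : ℝ → ℝ)
    (hg : ∀ τ : ℝ, g τ =
      (4 * (2 - b) / α) * (Real.exp (α * τ) - 1 - α * τ - (α ^ 2 / 2) * τ ^ 2)
      - (8 / α) * (Real.exp (α * τ) * (α * τ - 1) + 1 - (α ^ 2 / 2) * τ ^ 2)) :
    ∀ τ : ℝ, 0 ≤ τ → g τ ≤ 0 := by
  intro τ hτ
  set x := α * τ with hx
  have hg' : g τ = 4 / α * ((2 - b) * (exp x - 1 - x - x ^ 2 / 2)
      - 2 * (exp x * (x - 1) + 1 - x ^ 2 / 2)) := by
    rw [hg τ, hx]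
    ring
  rw [hg']
  exact mul_nonpos_of_nonneg_of_nonpos (by positivity) <| sub_nonpos.2 <|
    two_sub_mul_taylor_remainder_le hb0.le (mul_nonneg hα.le hτ)

theorem stmt_1 (α b : ℝ) (hα : 0 < α) (hb0 : 0 < b) (hb1 : b < 1)
    (g : ℝ → ℝ)
    (hg : ∀ τ : ℝ, g τ =
      (4 * (2 - b) / α) * (Real.exp (α * τ) - 1 - α * τ - (α ^ 2 / 2) * τ ^ 2)
      - (8 / α) * (Real.exp (α * τ) * (α * τ - 1) + 1 - (α ^ 2 / 2) * τ ^ 2)) :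
    ∀ τ : ℝ, 0 ≤ τ → g τ ≤ 0 :=
  stmt_1_general α b hα hb0 g hg
end

section
/- (Continuity/bootstrap argument) Let X : [0,T] → ℝ be nonnegative and continuous, and suppose there exist constants a, b > 0 and θ > 1 such that X(t) ≤ a + b·X(t)^θ for all t ∈ [0,T]. If a < (1 - 1/θ)·(θb)^{-1/(θ-1)} and X(0) ≤ (θb)^{-1/(θ-1)}, then X(t) ≤ θa/(θ-1) for all t ∈ [0,T]. -/
/-! The function `x ↦ x - b x^θ` increases on `[0, c]` up to its maximum `(1 - 1/θ) c` at
`c = (θb)^(-1/(θ-1))`. Since `a` lies below that maximum, the constraint `X ≤ a + b X^θ` forbids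
`X = c`, so by continuity `X` stays below `c`, where `b X^θ ≤ X / θ`; then `X ≤ a + X / θ`. -/

open Set

theorem IsPreconnected.forall_lt_of_forall_ne {α β : Type*} [TopologicalSpace α] [LinearOrder β]
    [TopologicalSpace β] [OrderClosedTopology β] {s : Set α} {f : α → β} {x₀ : α} {c : β}
    (hs : IsPreconnected s) (hf : ContinuousOn f s) (hx₀ : x₀ ∈ s) (h₀ : f x₀ ≤ c)
    (hne : ∀ x ∈ s, f x ≠ c) : ∀ x ∈ s, f x < c := by
  intro x hx
  by_contra! hle
  obtain ⟨y, hy, hyc⟩ := hs.intermediate_value hx₀ hx hf ⟨h₀, hle⟩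
  exact hne y hy hyc

namespace Bootstrap

noncomputable def criticalPoint (b θ : ℝ) : ℝ := (θ * b) ^ (-(1 / (θ - 1)))

variable {b θ : ℝ}

theorem criticalPoint_nonneg (hb : 0 < b) (hθ : 1 < θ) : 0 ≤ criticalPoint b θ :=
  Real.rpow_nonneg (by positivity) _

theorem mul_criticalPoint_rpow_sub_one (hb : 0 < b) (hθ : 1 < θ) :
    b * criticalPoint b θ ^ (θ - 1) = θ⁻¹ := by
  have hθb : 0 < θ * b := by positivity
  have hexp : -(1 / (θ - 1)) * (θ - 1) = -1 := by field_simp [(sub_pos.2 hθ).ne']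
  rw [criticalPoint, ← Real.rpow_mul hθb.le, hexp, Real.rpow_neg_one]
  field_simp

theorem mul_rpow_le_div_of_le_criticalPoint (hb : 0 < b) (hθ : 1 < θ) {x : ℝ} (hx : 0 ≤ x)
    (hxc : x ≤ criticalPoint b θ) : b * x ^ θ ≤ x / θ := by
  have hsplit : x ^ θ = x ^ (θ - 1) * x := by
    simpa using Real.rpow_add_one' hx (y := θ - 1) (by linarith)
  calc b * x ^ θ = b * x ^ (θ - 1) * x := by rw [hsplit, mul_assoc]
    _ ≤ b * criticalPoint b θ ^ (θ - 1) * x := by gcongr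
    _ = x / θ := by rw [mul_criticalPoint_rpow_sub_one hb hθ, inv_mul_eq_div]

theorem add_mul_criticalPoint_rpow_lt (hb : 0 < b) (hθ : 1 < θ) {a : ℝ}
    (ha : a < (1 - 1 / θ) * criticalPoint b θ) :
    a + b * criticalPoint b θ ^ θ < criticalPoint b θ := by
  have hc := mul_rpow_le_div_of_le_criticalPoint hb hθ (criticalPoint_nonneg hb hθ) le_rfl
  have : (1 - 1 / θ) * criticalPoint b θ = criticalPoint b θ - criticalPoint b θ / θ := by ring
  linarith

theorem le_of_le_add_mul_rpow (hb : 0 < b) (hθ : 1 < θ) {a x : ℝ} (hx : 0 ≤ x)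
    (hxc : x ≤ criticalPoint b θ) (h : x ≤ a + b * x ^ θ) : x ≤ θ * a / (θ - 1) := by
  have hθ0 : 0 < θ := by linarith
  have hx' : x ≤ a + x / θ :=
    h.trans (by gcongr; exact mul_rpow_le_div_of_le_criticalPoint hb hθ hx hxc)
  rw [le_div_iff₀ (by linarith)]
  have : θ * x ≤ θ * a + x := by
    calc θ * x ≤ θ * (a + x / θ) := by gcongr
      _ = θ * a + x := by field_simp
  linarith

end Bootstrap

open Bootstrap

theorem stmt_8_general (T a b θ : ℝ) (hb : 0 < b) (hθ : 1 < θ)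
    (X : ℝ → ℝ) (hcont : ContinuousOn X (Set.Icc 0 T))
    (hpos : ∀ t ∈ Set.Icc (0 : ℝ) T, 0 ≤ X t)
    (hineq : ∀ t ∈ Set.Icc (0 : ℝ) T, X t ≤ a + b * X t ^ θ)
    (hsmall : a < (1 - 1 / θ) * (θ * b) ^ (-(1 / (θ - 1)) : ℝ))
    (hX0 : X 0 ≤ (θ * b) ^ (-(1 / (θ - 1)) : ℝ)) :
    ∀ t ∈ Set.Icc (0 : ℝ) T, X t ≤ θ * a / (θ - 1) := by
  intro t ht
  have hne : ∀ s ∈ Icc 0 T, X s ≠ criticalPoint b θ := fun s hs heq => by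
    have := hineq s hs
    rw [heq] at this
    exact (add_mul_criticalPoint_rpow_lt hb hθ hsmall).not_ge this
  have hlt := isPreconnected_Icc.forall_lt_of_forall_ne hcont
    ⟨le_rfl, ht.1.trans ht.2⟩ hX0 hne t ht
  exact le_of_le_add_mul_rpow hb hθ (hpos t ht) hlt.le (hineq t ht)

theorem stmt_8 (T a b θ : ℝ) (hT : 0 < T) (ha : 0 < a) (hb : 0 < b) (hθ : 1 < θ)
    (X : ℝ → ℝ) (hcont : ContinuousOn X (Set.Icc 0 T))
    (hpos : ∀ t ∈ Set.Icc (0 : ℝ) T, 0 ≤ X t)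
    (hineq : ∀ t ∈ Set.Icc (0 : ℝ) T, X t ≤ a + b * X t ^ θ)
    (hsmall : a < (1 - 1 / θ) * (θ * b) ^ (-(1 / (θ - 1)) : ℝ))
    (hX0 : X 0 ≤ (θ * b) ^ (-(1 / (θ - 1)) : ℝ)) :
    ∀ t ∈ Set.Icc (0 : ℝ) T, X t ≤ θ * a / (θ - 1) :=
  stmt_8_general T a b θ hb hθ X hcont hpos hineq hsmall hX0
end
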